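/- If I is a Borel-fixed monomial ideal in K[x_0,...,x_n], then its saturation with respect to the irrelevant maximal ideal is generated by the monomials obtained by substituting x_0 = 1 in the minimal monomial generators of I. -/

import Mathlib

open MvPolynomial Filter

noncomputable section

/-- The Hilbert function of `K[x_0,...,x_{m-1}]/I` in degree `t`. -/
def hilb {K : Type*} [Field K] (m : ℕ) (I : Ideal (MvPolynomial (Fin m) K)) (t : ℕ) : ℤ :=
  (Module.finrank K (MvPolynomial.homogeneousSubmodule (Fin m) K t) : ℤ) -
  (Module.finrank K
    (Submodule.restrictScalars K
        (I : Submodule (MvPolynomial (Fin m) K) (MvPolynomial (Fin m) K)) ⊓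
      MvPolynomial.homogeneousSubmodule (Fin m) K t :
        Submodule K (MvPolynomial (Fin m) K)) : ℤ)

/-- Saturation of `I` w.r.t. the irrelevant ideal: `I^sat = ⋃_k (I : (x_0,...,x_{m-1})^k)`. -/
def sat {K : Type*} [Field K] (m : ℕ) (I : Ideal (MvPolynomial (Fin m) K)) :
    Ideal (MvPolynomial (Fin m) K) :=
  ⨆ k : ℕ, Submodule.colon
    (I : Submodule (MvPolynomial (Fin m) K) (MvPolynomial (Fin m) K))
    (((Ideal.span (Set.range X)) ^ k : Ideal (MvPolynomial (Fin m) K)) :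
      Submodule (MvPolynomial (Fin m) K) (MvPolynomial (Fin m) K))

/-- The combinatorial Borel condition: `x^α ∈ I`, `x_i ∣ x^α`, `j > i` implies
`(x_j/x_i)·x^α ∈ I` (variables ordered `x_{m-1} > ... > x_0`). -/
def borelCond {K : Type*} [Field K] (m : ℕ) (I : Ideal (MvPolynomial (Fin m) K)) : Prop :=
  ∀ α : Fin m →₀ ℕ, monomial α (1:K) ∈ I → ∀ i j : Fin m, i < j → α i ≠ 0 →
    monomial (α - Finsupp.single i 1 + Finsupp.single j 1) (1:K) ∈ I

/-- `I` is a monomial ideal. -/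
def isMonomialIdeal {K : Type*} [Field K] (m : ℕ) (I : Ideal (MvPolynomial (Fin m) K)) : Prop :=
  ∃ S : Set (Fin m →₀ ℕ), I = Ideal.span ((fun α => monomial α (1:K)) '' S)

/-- Increasing elementary Borel move on exponent vectors: `β = (x_{i+1}/x_i)·α`. -/
def stepUp (n : ℕ) (α β : Fin (n+1) →₀ ℕ) : Prop :=
  ∃ i : Fin n, α i.castSucc ≠ 0 ∧
    β = α - Finsupp.single i.castSucc 1 + Finsupp.single i.succ 1

/-- Borel partial order: `borelGE n α β` means `α ≥_B β`. -/
def borelGE (n : ℕ) (α β : Fin (n+1) →₀ ℕ) : Prop :=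
  Relation.ReflTransGen (stepUp n) β α

/-- Rational binomial coefficient `C(x, k) = x(x-1)...(x-k+1)/k!`. -/
def qchoose (x : ℚ) (k : ℕ) : ℚ := (∏ i ∈ Finset.range k, (x - i)) / (Nat.factorial k)

/-- `Σ_{i=0}^{r-1} C(t + a_i - i, a_i)` for a list `l = [a_0, ..., a_{r-1}]`. -/
def gsum (l : List ℕ) (t : ℚ) : ℚ :=
  (((List.range l.length).zip l).map (fun q => qchoose (t + (q.2 : ℚ) - (q.1 : ℚ)) q.2)).sum

/-- First difference operator on polynomials: `Δq(t) = q(t) - q(t-1)`. -/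
def dlt (q : Polynomial ℚ) : Polynomial ℚ := q - q.comp (Polynomial.X - 1)

/-!
Dividing out `x_0`: if `f * x_0^k ∈ I` for a monomial ideal `I`, every monomial of `f` is
divisible by a generator with its `x_0`-part removed. Conversely, the Borel property lets one
trade the `α_0` factors `x_0` of a generator `x^α` one at a time for arbitrary variables, so
`x^α / x_0^{α_0}` times any monomial of degree `α_0` lies in `I`.
-/

namespace MvPolynomial

variable {σ R : Type*} [CommSemiring R]

theorem monomial_one_mem_of_le {I : Ideal (MvPolynomial σ R)} {α β : σ →₀ ℕ} (hαβ : α ≤ β)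
    (hα : monomial α (1 : R) ∈ I) : monomial β (1 : R) ∈ I := by
  rw [← tsub_add_cancel_of_le hαβ, ← mul_one (1 : R), ← monomial_mul]
  exact I.mul_mem_left _ hα

theorem monomial_add_mem_of_le_degree {I : Ideal (MvPolynomial σ R)} {i : σ}
    (hmove : ∀ α j, j ≠ i → monomial (α + Finsupp.single i 1) (1 : R) ∈ I →
      monomial (α + Finsupp.single j 1) (1 : R) ∈ I)
    {c : ℕ} {γ β : σ →₀ ℕ} (hγ : monomial (γ + Finsupp.single i c) (1 : R) ∈ I)
    (hβ : c ≤ β.degree) : monomial (γ + β) (1 : R) ∈ I := by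
  induction c generalizing γ β with
  | zero =>
    rw [Finsupp.single_zero, add_zero] at hγ
    exact monomial_one_mem_of_le le_self_add hγ
  | succ c ih =>
    by_cases hβi : ∃ j ≠ i, β j ≠ 0
    · obtain ⟨j, hji, hβj⟩ := hβi
      obtain ⟨β', rfl⟩ : ∃ β', β = Finsupp.single j 1 + β' :=
        le_iff_exists_add.mp (Finsupp.single_le_iff.mpr (Nat.one_le_iff_ne_zero.mpr hβj))
      have hmoved : monomial (γ + Finsupp.single j 1 + Finsupp.single i c) (1 : R) ∈ I := by
        rw [add_right_comm]
        exact hmove _ j hji (by rwa [add_assoc, ← Finsupp.single_add])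
      rw [← add_assoc]
      refine ih hmoved ?_
      rw [map_add, Finsupp.degree_single] at hβ
      omega
    · push Not at hβi
      have hβ_eq : β = Finsupp.single i (β i) :=
        Finsupp.eq_single_iff.mpr ⟨fun j hj => Finset.mem_singleton.mpr
          (by_contra fun hji => Finsupp.mem_support_iff.mp hj (hβi j hji)), rfl⟩
      rw [hβ_eq, Finsupp.degree_single] at hβ
      refine monomial_one_mem_of_le (add_le_add le_rfl ?_) hγ
      rw [hβ_eq]
      exact Finsupp.single_le_single.mpr hβ

theorem span_monomial_update_mul_pow_idealOfVars_le {I : Ideal (MvPolynomial σ R)} {i : σ}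
    (hmove : ∀ α j, j ≠ i → monomial (α + Finsupp.single i 1) (1 : R) ∈ I →
      monomial (α + Finsupp.single j 1) (1 : R) ∈ I)
    {α : σ →₀ ℕ} (hα : monomial α (1 : R) ∈ I) :
    Ideal.span {monomial (Finsupp.update α i 0) (1 : R)} * idealOfVars σ R ^ α i ≤ I := by
  rw [pow_idealOfVars_eq_span, Ideal.span_mul_span', Ideal.span_le]
  rintro _ ⟨_, rfl, _, ⟨β, hβ, rfl⟩, rfl⟩
  dsimp only
  rw [monomial_mul, mul_one]
  refine monomial_add_mem_of_le_degree hmove ?_ (le_of_eq hβ.symm)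
  rwa [Finsupp.update_eq_erase_add_single, Finsupp.single_zero, add_zero,
    Finsupp.erase_add_single]

theorem mem_span_update_of_mul_X_pow_mem {S : Set (σ →₀ ℕ)} {i : σ} {k : ℕ}
    {f : MvPolynomial σ R} (hf : f * X i ^ k ∈ Ideal.span ((fun α => monomial α (1 : R)) '' S)) :
    f ∈ Ideal.span ((fun α => monomial (Finsupp.update α i 0) (1 : R)) '' S) := by
  rw [← Set.image_image (fun α => monomial α (1 : R)), mem_ideal_span_monomial_image]
  rw [mem_ideal_span_monomial_image] at hf
  intro δ hδ
  obtain ⟨α, hα, hαδ⟩ := hf (δ + Finsupp.single i k) <| by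
    rwa [mem_support_iff, X_pow_eq_monomial, coeff_mul_monomial, mul_one, ← mem_support_iff]
  refine ⟨_, ⟨α, hα, rfl⟩, fun j => ?_⟩
  dsimp only
  rw [← Finsupp.erase_eq_update_zero]
  rcases eq_or_ne j i with rfl | hji
  · simp
  · simpa [Finsupp.erase_ne hji, hji] using hαδ j

end MvPolynomial

theorem borelCond.monomial_add_single_mem {K : Type*} [Field K] {m : ℕ}
    {I : Ideal (MvPolynomial (Fin m) K)} (hborel : borelCond m I) {α : Fin m →₀ ℕ} {i j : Fin m}
    (hij : i < j) (hα : monomial (α + Finsupp.single i 1) (1 : K) ∈ I) :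
    monomial (α + Finsupp.single j 1) (1 : K) ∈ I := by
  simpa using hborel _ hα i j hij (by simp)

theorem statement2_general {K : Type*} [Field K] (n : ℕ)
    (S : Set (Fin (n+1) →₀ ℕ))
    (I : Ideal (MvPolynomial (Fin (n+1)) K))
    (hI : I = Ideal.span ((fun α => monomial α (1:K)) '' S))
    (hborel : borelCond (n+1) I) :
    sat (n+1) I =
      Ideal.span ((fun α => monomial (Finsupp.update α 0 0) (1:K)) '' S) := by
  apply le_antisymm
  · refine iSup_le fun k f hf => mem_span_update_of_mul_X_pow_mem (i := 0) (k := k) ?_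
    rw [← hI]
    exact Submodule.mem_colon.mp hf _
      (Ideal.pow_mem_pow (Ideal.subset_span (Set.mem_range_self 0)) k)
  · have hmove : ∀ α j, j ≠ 0 → monomial (α + Finsupp.single 0 1) (1 : K) ∈ I →
        monomial (α + Finsupp.single j 1) (1 : K) ∈ I :=
      fun _ _ hj => hborel.monomial_add_single_mem (Fin.pos_of_ne_zero hj)
    rw [Ideal.span_le]
    rintro _ ⟨α, hα, rfl⟩
    have hαI : monomial α (1 : K) ∈ I := hI ▸ Ideal.subset_span ⟨α, hα, rfl⟩
    refine Submodule.mem_iSup_of_mem (α 0) (Submodule.mem_colon.mpr fun p hp => ?_)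
    exact span_monomial_update_mul_pow_idealOfVars_le hmove hαI
      (Ideal.mul_mem_mul (Ideal.mem_span_singleton_self _) hp)

/-- for a Borel-fixed monomial ideal `I` generated by the monomials `x^α`,
`α ∈ S`, its saturation w.r.t. the irrelevant ideal is generated by the monomials
obtained substituting `x_0 = 1` in the generators. -/
theorem statement2 {K : Type*} [Field K] [CharZero K] (n : ℕ)
    (S : Set (Fin (n+1) →₀ ℕ))
    (I : Ideal (MvPolynomial (Fin (n+1)) K))
    (hI : I = Ideal.span ((fun α => monomial α (1:K)) '' S))
    (hborel : borelCond (n+1) I) :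
    sat (n+1) I =
      Ideal.span ((fun α => monomial (Finsupp.update α 0 0) (1:K)) '' S) :=
  statement2_general n S I hI hborel
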